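/- arXiv:2505.10118 — 5 statements merged into one kernel-verified Lean document; each statement's English description precedes it below -/
import Mathlib

section
/- Let V, P, S be nonempty bounded subsets of the Euclidean space ℝ^d with S ⊆ V, and set X = V ∪ P and X_s = S ∪ P. Let E be a normed vector space and let F be a map from subsets of ℝ^d to E which is Lipschitz with respect to the Hausdorff distance with constant C ≥ 1, i.e. ‖F(A) − F(B)‖ ≤ C · d_H(A, B) for all nonempty bounded A, B ⊆ ℝ^d. Then ‖F(X) − F(X_s)‖ ≤ C · max{ min{ d_H(S,V), d_H(V,P) }, min{ d_H(S,V), d_H(S,P) } }. -/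
/-!
Adjoining a common set `U` cannot increase the Hausdorff distance:
`d_H(A ∪ U, B ∪ U) ≤ d_H(A, B)`. Applied to `X = V ∪ P`, `X_s = S ∪ P` this gives
`d_H(X, X_s) ≤ d_H(V, S)`; since `S ⊆ V` we may also write `X = V ∪ X_s` and `X_s = P ∪ X_s`, which
gives `d_H(X, X_s) ≤ d_H(V, P)`. The Lipschitz bound for `F` then yields the claim, already with the
first term of the maximum.
-/

open Metric Bornology

section EMetric

variable {α : Type*} [PseudoEMetricSpace α] {s t u : Set α}

theorem hausdorffEDist_union_right_le :
    hausdorffEDist (s ∪ u) (t ∪ u) ≤ hausdorffEDist s t :=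
  hausdorffEDist_union_le.trans_eq <| by rw [hausdorffEDist_self, max_eq_left zero_le]

theorem hausdorffEDist_union_le_of_subset (hts : t ⊆ s) :
    hausdorffEDist (s ∪ u) (t ∪ u) ≤ hausdorffEDist s u := by
  calc hausdorffEDist (s ∪ u) (t ∪ u) = hausdorffEDist (s ∪ (t ∪ u)) (u ∪ (t ∪ u)) := by
        congr 1
        · rw [← Set.union_assoc, Set.union_eq_left.2 hts]
        · rw [Set.union_left_comm, Set.union_self]
    _ ≤ hausdorffEDist s u := hausdorffEDist_union_right_le

end EMetric

section Metric

variable {α : Type*} [PseudoMetricSpace α] {s t u : Set α}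

theorem hausdorffDist_union_right_le (hst : hausdorffEDist s t ≠ ⊤) :
    hausdorffDist (s ∪ u) (t ∪ u) ≤ hausdorffDist s t :=
  ENNReal.toReal_mono hst hausdorffEDist_union_right_le

theorem hausdorffDist_union_le_of_subset (hts : t ⊆ s) (hsu : hausdorffEDist s u ≠ ⊤) :
    hausdorffDist (s ∪ u) (t ∪ u) ≤ hausdorffDist s u :=
  ENNReal.toReal_mono hsu (hausdorffEDist_union_le_of_subset hts)

end Metric

/-- An error bound for visual token pruning: if `F` is Lipschitz w.r.t. the
Hausdorff distance with constant `C ≥ 1`, then for `X = V ∪ P` and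
`X_s = S ∪ P` with `S ⊆ V`, the pruning error is bounded as stated. -/
theorem error_bound_for_visual_token_pruning
    {d : ℕ} {E : Type*} [NormedAddCommGroup E]
    (V P S : Set (EuclideanSpace ℝ (Fin d)))
    (hV : V.Nonempty) (hP : P.Nonempty) (hS : S.Nonempty)
    (hVb : IsBounded V) (hPb : IsBounded P) (hSb : IsBounded S)
    (hSV : S ⊆ V)
    (F : Set (EuclideanSpace ℝ (Fin d)) → E) (C : ℝ) (hC : 1 ≤ C)
    (hF : ∀ A B : Set (EuclideanSpace ℝ (Fin d)), A.Nonempty → B.Nonempty →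
      IsBounded A → IsBounded B → ‖F A - F B‖ ≤ C * hausdorffDist A B) :
    ‖F (V ∪ P) - F (S ∪ P)‖ ≤
      C * max (min (hausdorffDist S V) (hausdorffDist V P))
              (min (hausdorffDist S V) (hausdorffDist S P)) := by
  have h_le_SV : hausdorffDist (V ∪ P) (S ∪ P) ≤ hausdorffDist S V := by
    rw [hausdorffDist_comm (s := S)]
    exact hausdorffDist_union_right_le (hausdorffEDist_ne_top_of_nonempty_of_bounded hV hS hVb hSb)
  have h_le_VP : hausdorffDist (V ∪ P) (S ∪ P) ≤ hausdorffDist V P :=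
    hausdorffDist_union_le_of_subset hSV
      (hausdorffEDist_ne_top_of_nonempty_of_bounded hV hP hVb hPb)
  calc ‖F (V ∪ P) - F (S ∪ P)‖ ≤ C * hausdorffDist (V ∪ P) (S ∪ P) :=
        hF _ _ (hV.mono Set.subset_union_left) (hS.mono Set.subset_union_left)
          (hVb.union hPb) (hSb.union hPb)
    _ ≤ _ := mul_le_mul_of_nonneg_left (le_max_of_le_left (le_min h_le_SV h_le_VP)) (by linarith)
end

section
/- Let V, P, S be nonempty bounded subsets of the Euclidean space ℝ^d with S ⊆ V. Then d_H(V ∪ P, S ∪ P) ≤ max{ min{ d_H(S,V), d_H(V,P) }, min{ d_H(S,V), d_H(S,P) } }. -/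
open Metric Bornology

/-- The Hausdorff distance between the original token set `V ∪ P` and its
pruned counterpart `S ∪ P` (with `S ⊆ V`) is bounded by the stated
max-min combination of pairwise Hausdorff distances. -/
theorem hausdorffDist_union_prune_bound
    {d : ℕ} (V P S : Set (EuclideanSpace ℝ (Fin d)))
    (hV : V.Nonempty) (hP : P.Nonempty) (hS : S.Nonempty)
    (hVb : IsBounded V) (hPb : IsBounded P) (hSb : IsBounded S)
    (hSV : S ⊆ V) :
    hausdorffDist (V ∪ P) (S ∪ P) ≤
      max (min (hausdorffDist S V) (hausdorffDist V P))
          (min (hausdorffDist S V) (hausdorffDist S P)) := by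
  have hVS : EMetric.hausdorffEdist V S ≠ ⊤ :=
    hausdorffEdist_ne_top_of_nonempty_of_bounded hV hS hVb hSb
  have hVP : EMetric.hausdorffEdist V P ≠ ⊤ :=
    hausdorffEdist_ne_top_of_nonempty_of_bounded hV hP hVb hPb
  have key : hausdorffDist (V ∪ P) (S ∪ P) ≤
      min (hausdorffDist S V) (hausdorffDist V P) := by
    apply hausdorffDist_le_of_infDist
    · exact le_min hausdorffDist_nonneg hausdorffDist_nonneg
    · intro x hx
      rcases hx with hx | hx
      · refine le_min ?_ ?_
        · calc infDist x (S ∪ P) ≤ infDist x S :=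
                infDist_le_infDist_of_subset Set.subset_union_left hS
            _ ≤ hausdorffDist V S := infDist_le_hausdorffDist_of_mem hx hVS
            _ = hausdorffDist S V := hausdorffDist_comm
        · calc infDist x (S ∪ P) ≤ infDist x P :=
                infDist_le_infDist_of_subset Set.subset_union_right hP
            _ ≤ hausdorffDist V P := infDist_le_hausdorffDist_of_mem hx hVP
      · have : infDist x (S ∪ P) = 0 := infDist_zero_of_mem (Set.mem_union_right _ hx)
        rw [this]
        exact le_min hausdorffDist_nonneg hausdorffDist_nonneg
    · intro y hy
      have hy' : y ∈ V ∪ P := by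
        rcases hy with hy | hy
        · exact Set.mem_union_left _ (hSV hy)
        · exact Set.mem_union_right _ hy
      rw [infDist_zero_of_mem hy']
      exact le_min hausdorffDist_nonneg hausdorffDist_nonneg
  exact key.trans (le_max_left _ _)
end

section
/- Let P and V be subsets of the Euclidean space ℝ^d, let a, a', r, ε_p, ε_v, d_eff > 0 be real numbers, and let K_p, K_v be positive reals with K = K_p + K_v. Suppose: (i) a·ε_p^{−d_eff} ≤ K_p and a'·ε_v^{−d_eff} ≤ K_v; (ii) every finite r-cover of P has cardinality at least n_P and every finite r-cover of V has cardinality at least n_V, S_p is a finite ε_p-cover of P of cardinality K_p, S_v is a finite ε_v-cover of V of cardinality K_v, and K_p + K_v < n_P + n_V. Then max{ε_p, ε_v} ≥ max{ r, (4·a·a')^{1/(2·d_eff)} · K^{−1/d_eff} }. -/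
/-!
If `max εp εv < r`, the two given covers are `r`-covers with fewer than `nP + nV` balls in
total, which is impossible; hence `r ≤ max εp εv`. For the second bound put `m = max εp εv`:
the hypotheses give `a ≤ Kp m^d` and `a' ≤ Kv m^d`, so by AM-GM
`4 a a' ≤ 4 Kp Kv m^{2d} ≤ (Kp + Kv)² m^{2d}`, and taking `2d`-th roots gives the claim.
-/

open Metric

theorem subset_biUnion_closedBall_of_le {X ι : Type*} [PseudoMetricSpace X] {s : Set X}
    {C : Set ι} {x : ι → X} {ε δ : ℝ} (hs : s ⊆ ⋃ c ∈ C, closedBall (x c) ε) (h : ε ≤ δ) :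
    s ⊆ ⋃ c ∈ C, closedBall (x c) δ :=
  hs.trans <| Set.iUnion₂_mono fun _ _ => closedBall_subset_closedBall h

theorem le_max_of_card_add_card_lt {X : Type*} [PseudoMetricSpace X] {P V : Set X}
    {r εp εv : ℝ} {nP nV : ℕ}
    (hnP : ∀ C : Finset X, P ⊆ ⋃ c ∈ C, closedBall c r → nP ≤ C.card)
    (hnV : ∀ C : Finset X, V ⊆ ⋃ c ∈ C, closedBall c r → nV ≤ C.card)
    {Sp Sv : Finset X} (hSp : P ⊆ ⋃ c ∈ Sp, closedBall c εp)
    (hSv : V ⊆ ⋃ c ∈ Sv, closedBall c εv) (hcard : Sp.card + Sv.card < nP + nV) :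
    r ≤ max εp εv := by
  by_contra! h
  have hP := hnP Sp <| subset_biUnion_closedBall_of_le hSp ((le_max_left _ _).trans h.le)
  have hV := hnV Sv <| subset_biUnion_closedBall_of_le hSv ((le_max_right _ _).trans h.le)
  omega

theorem le_mul_rpow_of_mul_rpow_neg_le {a ε m K d : ℝ} (hε : 0 < ε) (hεm : ε ≤ m)
    (hd : 0 ≤ d) (hK : 0 ≤ K) (h : a * ε ^ (-d) ≤ K) : a ≤ K * m ^ d :=
  calc a = a * ε ^ (-d) * ε ^ d := by
        rw [mul_assoc, ← Real.rpow_add hε, neg_add_cancel, Real.rpow_zero, mul_one]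
    _ ≤ K * m ^ d := by gcongr

theorem four_mul_le_sq_of_le_mul {a a' K K' t : ℝ} (ha'_nonneg : 0 ≤ a') (hKt : 0 ≤ K * t)
    (ha : a ≤ K * t) (ha' : a' ≤ K' * t) : 4 * a * a' ≤ ((K + K') * t) ^ 2 :=
  calc 4 * a * a' ≤ 4 * (K * t) * (K' * t) := by gcongr
    _ = 4 * K * K' * t ^ 2 := by ring
    _ ≤ (K + K') ^ 2 * t ^ 2 := by gcongr; exact four_mul_le_sq_add K K'
    _ = ((K + K') * t) ^ 2 := (mul_pow _ _ _).symm

theorem rpow_one_div_mul_rpow_neg_le {x K m d : ℝ} (hx : 0 ≤ x) (hK : 0 < K) (hm : 0 ≤ m)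
    (hd : 0 < d) (h : x ≤ K * m ^ d) : x ^ (1 / d) * K ^ (-(1 / d)) ≤ m := by
  have hroot : x ^ (1 / d) ≤ K ^ (1 / d) * m :=
    calc x ^ (1 / d) ≤ (K * m ^ d) ^ (1 / d) := by gcongr
      _ = K ^ (1 / d) * m := by
        rw [Real.mul_rpow hK.le (by positivity), one_div, Real.rpow_rpow_inv hm hd.ne']
  rwa [Real.rpow_neg hK.le, mul_inv_le_iff₀ (by positivity), mul_comm m]

theorem tradeoff_lower_bound_general
    {d : ℕ} (P V : Set (EuclideanSpace ℝ (Fin d)))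
    (a a' r εp εv d_eff Kp Kv : ℝ) (nP nV : ℕ)
    (ha : 0 < a) (ha' : 0 < a')
    (hεp : 0 < εp) (hεv : 0 < εv) (hd : 0 < d_eff)
    (hKp : 0 < Kp) (hKv : 0 < Kv)
    (h1 : a * εp ^ (-d_eff) ≤ Kp) (h2 : a' * εv ^ (-d_eff) ≤ Kv)
    (hnP : ∀ C : Finset (EuclideanSpace ℝ (Fin d)),
      P ⊆ (⋃ c ∈ C, closedBall c r) → nP ≤ C.card)
    (hnV : ∀ C : Finset (EuclideanSpace ℝ (Fin d)),
      V ⊆ (⋃ c ∈ C, closedBall c r) → nV ≤ C.card)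
    (Sp Sv : Finset (EuclideanSpace ℝ (Fin d)))
    (hSp : P ⊆ ⋃ c ∈ Sp, closedBall c εp) (hSpcard : (Sp.card : ℝ) = Kp)
    (hSv : V ⊆ ⋃ c ∈ Sv, closedBall c εv) (hSvcard : (Sv.card : ℝ) = Kv)
    (hK : Kp + Kv < (nP : ℝ) + (nV : ℝ)) :
    max r ((4 * a * a') ^ (1 / (2 * d_eff)) * (Kp + Kv) ^ (-(1 / d_eff))) ≤
      max εp εv := by
  refine max_le (le_max_of_card_add_card_lt hnP hnV hSp hSv ?_) ?_
  · rw [← hSpcard, ← hSvcard] at hK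
    exact_mod_cast hK
  have hp := le_mul_rpow_of_mul_rpow_neg_le hεp (le_max_left εp εv) hd.le hKp.le h1
  have hv := le_mul_rpow_of_mul_rpow_neg_le hεv (le_max_right εp εv) hd.le hKv.le h2
  have hsqrt : √(4 * a * a') ≤ (Kp + Kv) * max εp εv ^ d_eff :=
    Real.sqrt_le_iff.2 ⟨by positivity, four_mul_le_sq_of_le_mul ha'.le (by positivity) hp hv⟩
  have hroot : (4 * a * a') ^ (1 / (2 * d_eff)) = √(4 * a * a') ^ (1 / d_eff) := by
    rw [Real.sqrt_eq_rpow, ← Real.rpow_mul (by positivity)]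
    congr 1
    field_simp
  rw [hroot]
  exact rpow_one_div_mul_rpow_neg_le (Real.sqrt_nonneg _) (by positivity)
    (hεp.le.trans (le_max_left _ _)) hd hsqrt

/-- Trade-off between prompt alignment and visual preservation: the larger of
the two covering radii is bounded below by
`max{ r, (4·a·a')^{1/(2·d_eff)} · K^{-1/d_eff} }`. -/
theorem tradeoff_lower_bound
    {d : ℕ} (P V : Set (EuclideanSpace ℝ (Fin d)))
    (a a' r εp εv d_eff Kp Kv : ℝ) (nP nV : ℕ)
    (ha : 0 < a) (ha' : 0 < a') (hr : 0 < r)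
    (hεp : 0 < εp) (hεv : 0 < εv) (hd : 0 < d_eff)
    (hKp : 0 < Kp) (hKv : 0 < Kv)
    (h1 : a * εp ^ (-d_eff) ≤ Kp) (h2 : a' * εv ^ (-d_eff) ≤ Kv)
    (hnP : ∀ C : Finset (EuclideanSpace ℝ (Fin d)),
      P ⊆ (⋃ c ∈ C, closedBall c r) → nP ≤ C.card)
    (hnV : ∀ C : Finset (EuclideanSpace ℝ (Fin d)),
      V ⊆ (⋃ c ∈ C, closedBall c r) → nV ≤ C.card)
    (Sp Sv : Finset (EuclideanSpace ℝ (Fin d)))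
    (hSp : P ⊆ ⋃ c ∈ Sp, closedBall c εp) (hSpcard : (Sp.card : ℝ) = Kp)
    (hSv : V ⊆ ⋃ c ∈ Sv, closedBall c εv) (hSvcard : (Sv.card : ℝ) = Kv)
    (hK : Kp + Kv < (nP : ℝ) + (nV : ℝ)) :
    max r ((4 * a * a') ^ (1 / (2 * d_eff)) * (Kp + Kv) ^ (-(1 / d_eff))) ≤
      max εp εv :=
  tradeoff_lower_bound_general P V a a' r εp εv d_eff Kp Kv nP nV ha ha' hεp hεv hd hKp hKv h1 h2
    hnP hnV Sp Sv hSp hSpcard hSv hSvcard hK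
end

section
/- Let V and P be nonempty bounded subsets of the Euclidean space ℝ^d and let S' be a nonempty subset of V such that for every p ∈ P there exists s ∈ S' with dist(p, s) = inf_{v∈V} dist(p, v). Then for every p ∈ P, inf_{s∈S'} dist(p, s) = inf_{v∈V} dist(p, v), and consequently d_H(S', P) ≤ d_H(V, P). -/
open Metric Bornology

/-- Nearest-neighbor covering: if for every `p ∈ P` some `s ∈ S' ⊆ V` attains
the distance from `p` to `V`, then `inf_{s∈S'} dist(p,s) = inf_{v∈V} dist(p,v)`
for every `p ∈ P`, and consequently `d_H(S', P) ≤ d_H(V, P)`. -/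
theorem nn_covering_radius_bound
    {d : ℕ} (V P S' : Set (EuclideanSpace ℝ (Fin d)))
    (hV : V.Nonempty) (hP : P.Nonempty) (hS' : S'.Nonempty)
    (hVb : IsBounded V) (hPb : IsBounded P)
    (hS'V : S' ⊆ V)
    (hnn : ∀ p ∈ P, ∃ s ∈ S', dist p s = infDist p V) :
    (∀ p ∈ P, infDist p S' = infDist p V) ∧
      hausdorffDist S' P ≤ hausdorffDist V P := by
  have key : ∀ p ∈ P, infDist p S' = infDist p V := by
    intro p hp
    obtain ⟨s, hs, hds⟩ := hnn p hp
    refine le_antisymm ?_ (infDist_le_infDist_of_subset hS'V hS')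
    calc infDist p S' ≤ dist p s := infDist_le_dist_of_mem hs
      _ = infDist p V := hds
  refine ⟨key, ?_⟩
  have hne : EMetric.hausdorffEdist V P ≠ ⊤ :=
    Metric.hausdorffEdist_ne_top_of_nonempty_of_bounded hV hP hVb hPb
  refine hausdorffDist_le_of_infDist hausdorffDist_nonneg ?_ ?_
  · intro x hx
    exact infDist_le_hausdorffDist_of_mem (hS'V hx) hne
  · intro p hp
    rw [key p hp, hausdorffDist_comm]
    exact infDist_le_hausdorffDist_of_mem hp (by rwa [EMetric.hausdorffEdist_comm])
end

section
/- Let (α, dist) be a metric space, let V be a finite nonempty subset of α, and let s : ℕ → α be a farthest-point-sampling sequence for V: s(i) ∈ V for all i, and for every i and every v ∈ V, inf_{0 ≤ j ≤ i} dist(v, s(j)) ≤ inf_{0 ≤ j ≤ i} dist(s(i+1), s(j)). Then for every k ≥ 1 and every nonempty subset T ⊆ V with |T| = k, sup_{v∈V} inf_{0 ≤ j < k} dist(v, s(j)) ≤ 2 · sup_{v∈V} inf_{t∈T} dist(v, t). -/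
/-!
Let `v ∈ V` be a point realising the covering radius `R` of the first `k` samples. The greedy rule
makes each new sample at least `R` away from all earlier ones, so `s 0, …, s (k - 1), v` are
`k + 1` points at pairwise distance at least `R`. Two of them share a nearest centre in `T`, which
lies within the covering radius `r` of `T` of both, hence `R ≤ 2 r` by the triangle inequality.
-/

open Finset

section

variable {α : Type*} [MetricSpace α]

theorem le_two_mul_of_pairwise_le_dist_of_card_lt {ι : Type*} [Fintype ι] {g : ι → α}
    {T : Finset α} {R r : ℝ} (hsep : Pairwise fun i j => R ≤ dist (g i) (g j))
    (hcover : ∀ i, ∃ t ∈ T, dist (g i) t ≤ r) (hcard : T.card < Fintype.card ι) :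
    R ≤ 2 * r := by
  choose c hcT hc using hcover
  obtain ⟨i, j, hij, hcij⟩ := Fintype.exists_ne_map_eq_of_card_lt
    (fun i => (⟨c i, hcT i⟩ : T)) (by simpa using hcard)
  have hcij : c i = c j := congrArg Subtype.val hcij
  calc R ≤ dist (g i) (g j) := hsep hij
    _ ≤ dist (g i) (c i) + dist (g j) (c i) := dist_triangle_right _ _ _
    _ ≤ r + r := add_le_add (hc i) (hcij ▸ hc j)
    _ = 2 * r := (two_mul r).symm

theorem exists_mem_dist_le_sup'_inf' {V T : Finset α} (hV : V.Nonempty) (hT : T.Nonempty)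
    {p : α} (hp : p ∈ V) :
    ∃ t ∈ T, dist p t ≤ V.sup' hV (fun v => T.inf' hT (fun t => dist v t)) := by
  obtain ⟨t, ht, hpt⟩ := exists_mem_eq_inf' hT (fun t => dist p t)
  exact ⟨t, ht, hpt ▸ le_sup' (fun v => T.inf' hT (fun t => dist v t)) hp⟩

section Greedy

variable {V : Finset α} {s : ℕ → α}
  (hgreedy : ∀ i, ∀ v ∈ V,
    (range (i + 1)).inf' nonempty_range_add_one (fun j => dist v (s j)) ≤
      (range (i + 1)).inf' nonempty_range_add_one (fun j => dist (s (i + 1)) (s j)))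
include hgreedy

theorem inf'_range_dist_le_dist_of_greedy {v : α} (hv : v ∈ V) {i j : ℕ} (hij : i < j) :
    (range j).inf' (nonempty_range_iff.mpr (by omega)) (fun l => dist v (s l)) ≤
      dist (s i) (s j) := by
  obtain ⟨m, rfl⟩ : ∃ m, j = m + 1 := ⟨j - 1, by omega⟩
  calc _ ≤ (range (m + 1)).inf' nonempty_range_add_one (fun l => dist (s (m + 1)) (s l)) :=
        hgreedy m v hv
    _ ≤ dist (s (m + 1)) (s i) := inf'_le _ (mem_range.mpr hij)
    _ = dist (s i) (s (m + 1)) := dist_comm _ _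

/-- `none` stands for the point `v` and `some i` for the sample `s i`. -/
theorem pairwise_inf'_range_le_dist_of_greedy {v : α} (hv : v ∈ V) {k : ℕ} (hk : 0 < k) :
    Pairwise fun i j : Option (Fin k) =>
      (range k).inf' (nonempty_range_iff.mpr (by omega)) (fun l => dist v (s l)) ≤
        dist (i.elim' v (s ∘ Fin.val)) (j.elim' v (s ∘ Fin.val)) := by
  have hprefix : ∀ i j : Fin k, i < j →
      (range k).inf' (nonempty_range_iff.mpr (by omega)) (fun l => dist v (s l)) ≤
        dist (s i) (s j) := fun i j hij =>
    (inf'_mono _ (range_subset_range.mpr j.is_lt.le) _).trans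
      (inf'_range_dist_le_dist_of_greedy hgreedy hv hij)
  rintro (_ | i) (_ | j) hij
  · exact absurd rfl hij
  · exact inf'_le _ (mem_range.mpr j.is_lt)
  · exact (inf'_le _ (mem_range.mpr i.is_lt)).trans_eq (dist_comm _ _)
  · rcases lt_or_gt_of_ne (Option.some_injective _ |>.ne_iff.mp hij) with h | h
    · exact hprefix i j h
    · exact (hprefix j i h).trans_eq (dist_comm _ _)

end Greedy

end

/-- Farthest point sampling achieves a 2-approximation for the k-center
covering radius. -/
theorem fps_two_approximation
    {α : Type*} [MetricSpace α] (V : Finset α) (hV : V.Nonempty)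
    (s : ℕ → α) (hs : ∀ i, s i ∈ V)
    (hgreedy : ∀ i, ∀ v ∈ V,
      (Finset.range (i + 1)).inf' Finset.nonempty_range_add_one
          (fun j => dist v (s j)) ≤
        (Finset.range (i + 1)).inf' Finset.nonempty_range_add_one
          (fun j => dist (s (i + 1)) (s j))) :
    ∀ k : ℕ, ∀ hk : 1 ≤ k, ∀ T : Finset α, T ⊆ V → ∀ hT : T.Nonempty,
      T.card = k →
      V.sup' hV (fun v =>
          (Finset.range k).inf'
            (Finset.nonempty_range_iff.mpr (by omega))
            (fun j => dist v (s j))) ≤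
        2 * V.sup' hV (fun v => T.inf' hT (fun t => dist v t)) := by
  intro k hk T _ hT hcard
  obtain ⟨v, hv, hsup⟩ := exists_mem_eq_sup' hV
    (fun v => (range k).inf' (nonempty_range_iff.mpr (by omega)) (fun j => dist v (s j)))
  rw [hsup]
  refine le_two_mul_of_pairwise_le_dist_of_card_lt (T := T)
    (pairwise_inf'_range_le_dist_of_greedy hgreedy hv hk) (fun i => ?_) (by simp [hcard])
  cases i with
  | none => exact exists_mem_dist_le_sup'_inf' hV hT hv
  | some i => exact exists_mem_dist_le_sup'_inf' hV hT (hs i)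
end
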